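/- arXiv:2508.08111 — 3 statements merged into one kernel-verified Lean document; each statement's English description precedes it below -/
import Mathlib

section
/- Let G be a group, Γ a subsemigroup of G, and k ≥ 1. If H₁,…,H_k and S₁,…,S_k are subsets of G with each Sᵢ finite, and Γ ⊆ ⋃ᵢ Sᵢ Hᵢ, then there exist an index i and a finite subset Fᵢ of G such that Γ ⊆ Fᵢ Hᵢ Hᵢ⁻¹ Fᵢ⁻¹. -/
/-!
Let `G` act on its ultrafilters by left translation and let `M` be a minimal closed
`Γ`-invariant set of ultrafilters containing `Γ`. A point `U₀ ∈ M` contains a piece `s • Hᵢ`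
of the cover, and by minimality and compactness there is a finite `T ⊆ G` such that every
ultrafilter in `M` contains some `t⁻¹ • s • Hᵢ` with `t ∈ T`. Applied to `U₀` and to `y • U₀`
for `y ∈ Γ` this gives one `z` with `t₀ z, t₁ y z ∈ s Hᵢ`, so that
`y ∈ F Hᵢ Hᵢ⁻¹ F⁻¹` for `F = {t⁻¹ s | t ∈ T}`.
-/

open Pointwise Set Filter

namespace Ultrafilter

variable {M α β : Type*}

theorem continuous_map (f : α → β) : Continuous (Ultrafilter.map f) :=
  ultrafilterBasis_is_basis.continuous_iff.2 <| forall_mem_range.2 fun s ↦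
    ultrafilter_isOpen_basic (f ⁻¹' s)

variable [Monoid M] [MulAction M α]

instance : MulAction M (Ultrafilter α) where
  smul g U := U.map (g • ·)
  one_smul U := by
    change U.map _ = U
    simp only [one_smul]
    exact map_id' U
  mul_smul g h U := by
    change U.map _ = (U.map _).map _
    simp only [map_map, Function.comp_def, mul_smul]

theorem mem_smul_iff {g : M} {U : Ultrafilter α} {s : Set α} :
    s ∈ g • U ↔ (g • ·) ⁻¹' s ∈ U :=
  mem_map

instance : ContinuousConstSMul M (Ultrafilter α) :=
  ⟨fun _ ↦ continuous_map _⟩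

end Ultrafilter

section Subsystem

variable {G X : Type*} [Monoid G] [MulAction G X] [TopologicalSpace X]

structure IsSubsystem (Γ : Set G) (K : Set X) : Prop where
  nonempty : K.Nonempty
  isClosed : IsClosed K
  smul_subset : ∀ g ∈ Γ, g • K ⊆ K

theorem exists_minimal_isSubsystem_subset [CompactSpace X] {Γ : Set G} {K : Set X}
    (hK : IsSubsystem Γ K) : ∃ M ⊆ K, Minimal (IsSubsystem Γ) M := by
  refine zorn_superset_nonempty _ (fun c hc hchain ⟨K₀, hK₀⟩ ↦ ?_) K hK
  have : Nonempty c := ⟨⟨K₀, hK₀⟩⟩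
  refine ⟨⋂₀ c, ⟨?_, isClosed_sInter fun L hL ↦ (hc hL).isClosed, fun g hg ↦ ?_⟩,
    fun L hL ↦ sInter_subset_of_mem hL⟩
  · exact IsCompact.nonempty_sInter_of_directed_nonempty_isCompact_isClosed
      (fun a ha b hb ↦ (hchain.total ha hb).elim (fun h ↦ ⟨a, ha, subset_rfl, h⟩)
        fun h ↦ ⟨b, hb, h, subset_rfl⟩)
      (fun L hL ↦ (hc hL).nonempty) (fun L hL ↦ (hc hL).isClosed.isCompact)
      fun L hL ↦ (hc hL).isClosed
  · exact subset_sInter fun L hL ↦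
      (smul_set_mono (sInter_subset_of_mem hL)).trans ((hc hL).smul_subset g hg)

variable [ContinuousConstSMul G X] {Γ : Subsemigroup G} {M O : Set X}

/-- The points that never visit `O` form a closed invariant subset of `M` missing `O`. -/
theorem Minimal.subset_biUnion_smul_preimage (hM : Minimal (IsSubsystem (Γ : Set G)) M)
    (hO : IsOpen O) (hOM : (O ∩ M).Nonempty) :
    M ⊆ ⋃ t ∈ insert 1 (Γ : Set G), (t • ·) ⁻¹' O := by
  set N := M \ ⋃ t ∈ insert 1 (Γ : Set G), (t • ·) ⁻¹' O
  suffices N = ∅ by rwa [sdiff_eq_empty] at this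
  by_contra hN
  have hNM : N ⊆ M := sdiff_subset
  have hsub : IsSubsystem (Γ : Set G) N := by
    refine ⟨nonempty_iff_ne_empty.2 hN,
      hM.prop.isClosed.sdiff (isOpen_biUnion fun t _ ↦ hO.preimage (continuous_const_smul t)), ?_⟩
    rintro g hg _ ⟨x, ⟨hxM, hx⟩, rfl⟩
    refine ⟨hM.prop.smul_subset g hg (smul_mem_smul_set hxM), fun hgx ↦ hx ?_⟩
    obtain ⟨t, ht, htx⟩ := mem_iUnion₂.1 hgx
    have htg : t * g ∈ insert 1 (Γ : Set G) := by
      rcases ht with rfl | ht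
      · simpa using Or.inr hg
      · exact Or.inr (Γ.mul_mem ht hg)
    exact mem_iUnion₂.2 ⟨t * g, htg, by simpa [mul_smul] using htx⟩
  obtain ⟨x, hxO, hxM⟩ := hOM
  have hxN : x ∈ N := hM.eq_of_subset hsub hNM ▸ hxM
  exact hxN.2 (mem_iUnion₂.2 ⟨1, mem_insert _ _, by simpa using hxO⟩)

theorem Minimal.exists_finset_subset_biUnion_smul_preimage [CompactSpace X]
    (hM : Minimal (IsSubsystem (Γ : Set G)) M) (hO : IsOpen O) (hOM : (O ∩ M).Nonempty) :
    ∃ T : Finset G, M ⊆ ⋃ t ∈ T, (t • ·) ⁻¹' O := by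
  obtain ⟨T, -, hTfin, hT⟩ := hM.prop.isClosed.isCompact.elim_finite_subcover_image
    (fun t _ ↦ hO.preimage (continuous_const_smul t)) (hM.subset_biUnion_smul_preimage hO hOM)
  exact ⟨hTfin.toFinset, by simpa using hT⟩

end Subsystem

theorem isSubsystem_setOf_mem {G : Type*} [Monoid G] (Γ : Subsemigroup G)
    (hΓ : (Γ : Set G).Nonempty) :
    IsSubsystem (Γ : Set G) {U : Ultrafilter G | (Γ : Set G) ∈ U} := by
  obtain ⟨γ, hγ⟩ := hΓ
  refine ⟨⟨pure γ, hγ⟩, ultrafilter_isClosed_basic _, ?_⟩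
  rintro g hg _ ⟨U, hU, rfl⟩
  exact Ultrafilter.mem_smul_iff.2 (mem_of_superset hU fun _ hx ↦ Γ.mul_mem hg hx)

theorem mem_mul_mul_inv_mul_inv_of_mem_smul {G : Type*} [Group G] {F H : Set G}
    {s t₀ t₁ y z : G} (ht₀ : t₀⁻¹ * s ∈ F) (ht₁ : t₁⁻¹ * s ∈ F) (hz₀ : t₀ * z ∈ s • H)
    (hz₁ : t₁ * (y * z) ∈ s • H) : y ∈ F * H * H⁻¹ * F⁻¹ := by
  obtain ⟨h₀, hh₀, he₀⟩ := hz₀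
  obtain ⟨h₁, hh₁, he₁⟩ := hz₁
  have hy : y = t₁⁻¹ * s * h₁ * h₀⁻¹ * (t₀⁻¹ * s)⁻¹ := by
    simp only [smul_eq_mul] at he₀ he₁
    calc y = t₁⁻¹ * (t₁ * (y * z)) * (t₀⁻¹ * (t₀ * z))⁻¹ := by group
      _ = t₁⁻¹ * s * h₁ * h₀⁻¹ * (t₀⁻¹ * s)⁻¹ := by rw [← he₀, ← he₁]; group
  rw [hy]
  exact mul_mem_mul (mul_mem_mul (mul_mem_mul ht₁ hh₁) (inv_mem_inv.2 hh₀)) (inv_mem_inv.2 ht₀)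

theorem stmt0 {G : Type*} [Group G] (Γ : Set G)
    (hΓ : ∀ a ∈ Γ, ∀ b ∈ Γ, a * b ∈ Γ)
    (k : ℕ) (hk : 1 ≤ k) (H S : Fin k → Set G) (hS : ∀ i, (S i).Finite)
    (hcover : Γ ⊆ ⋃ i, S i * H i) :
    ∃ (i : Fin k) (F : Set G), F.Finite ∧ Γ ⊆ F * H i * (H i)⁻¹ * F⁻¹ := by
  rcases Γ.eq_empty_or_nonempty with rfl | hne
  · exact ⟨⟨0, hk⟩, ∅, finite_empty, empty_subset _⟩
  let Γs : Subsemigroup G := ⟨Γ, fun {a b} ha hb ↦ hΓ a ha b hb⟩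
  obtain ⟨M, hMΓ, hM⟩ := exists_minimal_isSubsystem_subset (isSubsystem_setOf_mem Γs hne)
  obtain ⟨U₀, hU₀⟩ := hM.prop.nonempty
  have hU₀cover : (⋃ i ∈ univ, ⋃ s ∈ S i, s • H i) ∈ U₀ := by
    simp only [mem_univ, iUnion_true, iUnion_smul_left_image, smul_eq_mul]
    exact mem_of_superset (hMΓ hU₀) hcover
  obtain ⟨i, -, hi⟩ := (Ultrafilter.finite_biUnion_mem_iff finite_univ).1 hU₀cover
  obtain ⟨s, -, hsU₀⟩ := (Ultrafilter.finite_biUnion_mem_iff (hS i)).1 hi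
  obtain ⟨T, hT⟩ := hM.exists_finset_subset_biUnion_smul_preimage
    (ultrafilter_isOpen_basic (s • H i)) ⟨U₀, hsU₀, hU₀⟩
  refine ⟨i, (fun t ↦ t⁻¹ * s) '' T, T.finite_toSet.image _, fun y hy ↦ ?_⟩
  obtain ⟨t₀, ht₀, hU₀t₀⟩ := mem_iUnion₂.1 (hT hU₀)
  obtain ⟨t₁, ht₁, hU₀t₁⟩ := mem_iUnion₂.1 (hT (hM.prop.smul_subset y hy (smul_mem_smul_set hU₀)))
  simp only [mem_preimage, mem_ofPred_eq, Ultrafilter.mem_smul_iff] at hU₀t₀ hU₀t₁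
  obtain ⟨z, hz₁, hz₀⟩ := Ultrafilter.nonempty_of_mem (inter_mem hU₀t₁ hU₀t₀)
  exact mem_mul_mul_inv_mul_inv_of_mem_smul (mem_image_of_mem _ ht₀) (mem_image_of_mem _ ht₁)
    hz₀ (by simpa [mul_assoc] using hz₁)
end

section
/- For every ε > 0 there exists D ≥ 1 such that: for every g ∈ GL(V) of a Euclidean space V of dimension d ≥ 2, there exist a point y_g⁺ ∈ ℙ(V) and a projective hyperplane Y_g⁻ ⊂ ℙ(V) such that the restriction of the projective action of g to the set B^ε_{Y_g⁻} of points at distance ≥ ε from Y_g⁻ is D·e^{−(μ₁(g)−μ₂(g))}-Lipschitz and its image is contained in the closed ball of radius D·e^{−(μ₁(g)−μ₂(g))} around y_g⁺, where μ₁(g) ≥ μ₂(g) are the logarithms of the two largest singular values of g. -/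
/-!
Let `v` be a unit vector on which `g` attains its norm and `W = v^⊥`. Maximality makes `v` an
eigenvector of `g† g`, so `g W ⊥ g v`, `‖g p‖ ≥ |⟪v, p⟫| ‖g‖`, and (Courant–Fischer)
`‖g|_W‖ = e^{μ₂(g)}`. For a unit vector `p`, being `ε`-far from `ℙ(W)` means `|⟪v, p⟫| ≥ ε`.
The sine of the angle between `g a` and `g b` is at most `‖g (a - t b)‖ / ‖g a‖` for every `t`;
choosing `t` with `a - t b ∈ W` bounds it by `e^{μ₂(g) - μ₁(g)} ‖a - t b‖ / ε`. Taking `b = v`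
gives the ball around `[g v]`, and taking `b` another point `ε`-far from `ℙ(W)` gives the
Lipschitz bound, since then `‖a - t b‖ ≤ (1 + ε⁻¹) d([a], [b])`.
-/

/-- The angle metric `d([v],[w]) = sin ∠(v,w)` on real projective space. -/
noncomputable def dproj {d : ℕ}
    (x y : Projectivization ℝ (EuclideanSpace ℝ (Fin d))) : ℝ :=
  Real.sqrt (1 - ((inner ℝ x.rep y.rep : ℝ) / (‖x.rep‖ * ‖y.rep‖)) ^ 2)

/-- The projective action of an invertible linear map. -/
noncomputable def projAct {d : ℕ}
    (g : EuclideanSpace ℝ (Fin d) ≃L[ℝ] EuclideanSpace ℝ (Fin d)) :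
    Projectivization ℝ (EuclideanSpace ℝ (Fin d)) →
      Projectivization ℝ (EuclideanSpace ℝ (Fin d)) :=
  Projectivization.map (g.toLinearEquiv : EuclideanSpace ℝ (Fin d) →ₗ[ℝ] EuclideanSpace ℝ (Fin d))
    g.toLinearEquiv.injective

/-- `μ₁(g)`: the logarithm of the first singular value (the operator norm). -/
noncomputable def mu1 {d : ℕ}
    (g : EuclideanSpace ℝ (Fin d) ≃L[ℝ] EuclideanSpace ℝ (Fin d)) : ℝ :=
  Real.log ‖(g : EuclideanSpace ℝ (Fin d) →L[ℝ] EuclideanSpace ℝ (Fin d))‖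

/-- `μ₂(g)`: the logarithm of the second singular value, via the Courant–Fischer
characterization `s₂(g) = min over hyperplanes W of ‖g|_W‖`. -/
noncomputable def mu2 {d : ℕ}
    (g : EuclideanSpace ℝ (Fin d) ≃L[ℝ] EuclideanSpace ℝ (Fin d)) : ℝ :=
  Real.log (⨅ W : {W : Submodule ℝ (EuclideanSpace ℝ (Fin d)) //
      Module.finrank ℝ W = d - 1},
    ‖((g : EuclideanSpace ℝ (Fin d) →L[ℝ] EuclideanSpace ℝ (Fin d)).comp W.1.subtypeL)‖)

open scoped RealInnerProductSpace
open Module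

theorem eq_zero_of_forall_mul_le_sq_mul {a C : ℝ} (h : ∀ t : ℝ, t * a ≤ t ^ 2 * C) : a = 0 := by
  have hK : 0 < |C| + 1 := by positivity
  have h₁ : a / (|C| + 1) * a ≤ (a / (|C| + 1)) ^ 2 * |C| :=
    (h _).trans (mul_le_mul_of_nonneg_left (le_abs_self C) (sq_nonneg _))
  rw [div_pow, div_mul_eq_mul_div, div_mul_eq_mul_div, div_le_div_iff₀ hK (by positivity)] at h₁
  nlinarith [sq_nonneg a, abs_nonneg C]

theorem ContinuousLinearMap.exists_norm_eq_one_norm_apply_eq_opNorm {E F : Type*}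
    [NormedAddCommGroup E] [NormedSpace ℝ E] [Nontrivial E] [FiniteDimensional ℝ E]
    [SeminormedAddCommGroup F] [NormedSpace ℝ F] (f : E →L[ℝ] F) :
    ∃ v : E, ‖v‖ = 1 ∧ ‖f v‖ = ‖f‖ := by
  have hmem :=
    ((isCompact_sphere (0 : E) 1).image (by fun_prop : Continuous fun x => ‖f x‖)).sSup_mem
      ((NormedSpace.sphere_nonempty.mpr zero_le_one).image _)
  rw [f.sSup_sphere_eq_norm] at hmem
  obtain ⟨v, hv, hfv⟩ := hmem
  exact ⟨v, mem_sphere_zero_iff_norm.1 hv, hfv⟩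

section OpNormMaximizer

variable {E F : Type*} [NormedAddCommGroup E] [InnerProductSpace ℝ E]
  [NormedAddCommGroup F] [InnerProductSpace ℝ F]

theorem finrank_orthogonal_span_singleton_eq_sub_one [FiniteDimensional ℝ E] {v : E} (hv : v ≠ 0) :
    finrank ℝ (ℝ ∙ v)ᗮ = finrank ℝ E - 1 := by
  have h := (ℝ ∙ v).finrank_add_finrank_orthogonal
  rw [finrank_span_singleton hv] at h
  omega

theorem norm_sub_inner_div_inner_smul_le {v r : E} (hv : ‖v‖ = 1) (hr : ‖r‖ = 1) (y : E) :
    ‖y - (⟪v, y⟫ / ⟪v, r⟫) • r‖ ≤ (1 + |⟪v, r⟫|⁻¹) * ‖y‖ := by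
  have hvy : |⟪v, y⟫| ≤ ‖y‖ := by simpa [hv] using abs_real_inner_le_norm v y
  calc ‖y - (⟪v, y⟫ / ⟪v, r⟫) • r‖ ≤ ‖y‖ + |⟪v, y⟫| * |⟪v, r⟫|⁻¹ := by
        simpa [norm_smul, hr, abs_div, div_eq_mul_inv] using norm_sub_le y ((⟪v, y⟫ / ⟪v, r⟫) • r)
    _ ≤ ‖y‖ + ‖y‖ * |⟪v, r⟫|⁻¹ := by gcongr
    _ = (1 + |⟪v, r⟫|⁻¹) * ‖y‖ := by ring

variable {f : E →L[ℝ] F} {v : E}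

theorem inner_apply_apply_eq_of_norm_apply_eq_opNorm (hv : ‖v‖ = 1) (hfv : ‖f v‖ = ‖f‖) (p : E) :
    ⟪f v, f p⟫ = ‖f‖ ^ 2 * ⟪v, p⟫ := by
  suffices h : ⟪f v, f p⟫ - ‖f‖ ^ 2 * ⟪v, p⟫ = 0 by linarith
  refine eq_zero_of_forall_mul_le_sq_mul (C := (‖f‖ ^ 2 * ‖p‖ ^ 2 - ‖f p‖ ^ 2) / 2) fun t => ?_
  have h := pow_le_pow_left₀ (norm_nonneg _) (f.le_opNorm (v + t • p)) 2
  rw [mul_pow, map_add, map_smul, norm_add_sq_real, norm_add_sq_real, norm_smul, norm_smul,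
    real_inner_smul_right, real_inner_smul_right, hv, hfv, Real.norm_eq_abs, mul_pow, mul_pow,
    sq_abs, one_pow] at h
  linarith

theorem abs_inner_mul_opNorm_le_norm_apply (hv : ‖v‖ = 1) (hfv : ‖f v‖ = ‖f‖) (p : E) :
    |⟪v, p⟫| * ‖f‖ ≤ ‖f p‖ := by
  have h := abs_real_inner_le_norm (f v) (f p)
  rw [inner_apply_apply_eq_of_norm_apply_eq_opNorm hv hfv, hfv, abs_mul,
    abs_of_nonneg (by positivity)] at h
  rcases (norm_nonneg f).eq_or_lt with h0 | h0
  · rw [← h0, mul_zero]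
    exact norm_nonneg _
  · nlinarith

theorem norm_apply_mul_norm_le_of_inner_eq_zero (hv : ‖v‖ = 1) (hfv : ‖f v‖ = ‖f‖) {u : E}
    (hu : ⟪v, u⟫ = 0) (α β : ℝ) : ‖f u‖ * ‖α • v + β • u‖ ≤ ‖u‖ * ‖f (α • v + β • u)‖ := by
  have hfu : ⟪f v, f u⟫ = 0 := by
    rw [inner_apply_apply_eq_of_norm_apply_eq_opNorm hv hfv, hu, mul_zero]
  have hle : ‖f u‖ ^ 2 ≤ ‖f‖ ^ 2 * ‖u‖ ^ 2 := by
    rw [← mul_pow]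
    exact pow_le_pow_left₀ (norm_nonneg _) (f.le_opNorm u) 2
  rw [← pow_le_pow_iff_left₀ (by positivity) (by positivity) two_ne_zero, mul_pow, mul_pow,
    map_add, map_smul, map_smul, norm_add_sq_real, norm_add_sq_real, real_inner_smul_left,
    real_inner_smul_right, real_inner_smul_left, real_inner_smul_right, hu, hfu, norm_smul,
    norm_smul, norm_smul, norm_smul, hv, hfv]
  simp only [Real.norm_eq_abs, mul_pow, sq_abs]
  nlinarith [mul_le_mul_of_nonneg_left hle (sq_nonneg α)]

theorem norm_comp_orthogonal_subtypeL_le [FiniteDimensional ℝ E] (hv : ‖v‖ = 1)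
    (hfv : ‖f v‖ = ‖f‖) {W : Submodule ℝ E} (hW : finrank ℝ E ≤ finrank ℝ W + 1) :
    ‖f.comp (ℝ ∙ v)ᗮ.subtypeL‖ ≤ ‖f.comp W.subtypeL‖ := by
  refine ContinuousLinearMap.opNorm_le_bound _ (by positivity) fun ⟨u, hu⟩ => ?_
  change ‖f u‖ ≤ ‖f.comp W.subtypeL‖ * ‖u‖
  rcases eq_or_ne u 0 with rfl | hu0
  · simp
  have hv0 : v ≠ 0 := ne_zero_of_norm_ne_zero (hv ▸ one_ne_zero)
  have hvu : ⟪v, u⟫ = 0 := Submodule.mem_orthogonal_singleton_iff_inner_right.mp hu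
  have hU : finrank ℝ ↥((ℝ ∙ v) ⊔ (ℝ ∙ u)) = 2 := by
    have h := Submodule.finrank_sup_add_finrank_inf_eq (ℝ ∙ v) (ℝ ∙ u)
    rw [((Submodule.orthogonal_disjoint _).mono_right
      ((Submodule.span_singleton_le_iff_mem _ _).2 hu)).eq_bot, finrank_bot,
      finrank_span_singleton hv0, finrank_span_singleton hu0] at h
    omega
  have hmeet : ¬ Disjoint W ((ℝ ∙ v) ⊔ (ℝ ∙ u)) := fun h => by
    have := Submodule.finrank_add_finrank_le_of_disjoint h
    omega
  obtain ⟨z, hzW, hzU, hz0⟩ : ∃ z ∈ W, z ∈ (ℝ ∙ v) ⊔ (ℝ ∙ u) ∧ z ≠ 0 := by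
    simpa [Submodule.disjoint_def] using hmeet
  obtain ⟨_, hα, _, hβ, rfl⟩ := Submodule.mem_sup.mp hzU
  obtain ⟨α, rfl⟩ := Submodule.mem_span_singleton.mp hα
  obtain ⟨β, rfl⟩ := Submodule.mem_span_singleton.mp hβ
  have h₁ := norm_apply_mul_norm_le_of_inner_eq_zero hv hfv hvu α β
  have h₂ := (f.comp W.subtypeL).le_opNorm ⟨_, hzW⟩
  refine le_of_mul_le_mul_right ?_ (norm_pos_iff.2 hz0)
  calc ‖f u‖ * ‖α • v + β • u‖ ≤ ‖u‖ * ‖f (α • v + β • u)‖ := h₁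
    _ ≤ ‖u‖ * (‖f.comp W.subtypeL‖ * ‖α • v + β • u‖) := by gcongr; exact h₂
    _ = _ := by ring

theorem iInf_norm_comp_subtypeL_eq [FiniteDimensional ℝ E] {n : ℕ} (hn : finrank ℝ E = n)
    (hv : ‖v‖ = 1) (hfv : ‖f v‖ = ‖f‖) :
    ⨅ W : {W : Submodule ℝ E // finrank ℝ W = n - 1}, ‖f.comp W.1.subtypeL‖
      = ‖f.comp (ℝ ∙ v)ᗮ.subtypeL‖ := by
  have hv0 : v ≠ 0 := ne_zero_of_norm_ne_zero (hv ▸ one_ne_zero)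
  have hW : finrank ℝ (ℝ ∙ v)ᗮ = n - 1 := by
    rw [finrank_orthogonal_span_singleton_eq_sub_one hv0, hn]
  have : Nonempty {W : Submodule ℝ E // finrank ℝ W = n - 1} := ⟨⟨_, hW⟩⟩
  refine le_antisymm ?_ (le_ciInf fun W => norm_comp_orthogonal_subtypeL_le hv hfv (by omega))
  refine ciInf_le ⟨0, ?_⟩ (⟨_, hW⟩ : {W : Submodule ℝ E // finrank ℝ W = n - 1})
  rintro _ ⟨W, rfl⟩
  exact norm_nonneg (f.comp W.1.subtypeL)

end OpNormMaximizer

theorem Projectivization.exists_eq_mk_norm_eq_one {E : Type*} [NormedAddCommGroup E]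
    [NormedSpace ℝ E] (x : Projectivization ℝ E) :
    ∃ (p : E) (hp : p ≠ 0), ‖p‖ = 1 ∧ x = Projectivization.mk ℝ p hp := by
  induction x using Projectivization.ind with
  | h a ha =>
    have ha' : ‖a‖ ≠ 0 := norm_ne_zero_iff.2 ha
    refine ⟨‖a‖⁻¹ • a, smul_ne_zero (inv_ne_zero ha') ha, by simp [norm_smul, ha'], ?_⟩
    exact (Projectivization.mk_eq_mk_iff' ℝ _ _ _ _).2 ⟨‖a‖, by simp [smul_smul, ha']⟩

section Projective

open Projectivization

variable {d : ℕ}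

local notation "V" => EuclideanSpace ℝ (Fin d)

theorem projAct_mk (g : V ≃L[ℝ] V) (p : V) (hp : p ≠ 0) :
    projAct g (mk ℝ p hp) = mk ℝ (g p) ((map_ne_zero_iff g g.injective).2 hp) :=
  map_mk _ _ _ _

theorem dproj_mk (a b : V) (ha : a ≠ 0) (hb : b ≠ 0) :
    dproj (mk ℝ a ha) (mk ℝ b hb) = √(1 - (⟪a, b⟫ / (‖a‖ * ‖b‖)) ^ 2) := by
  obtain ⟨s, hs⟩ := exists_smul_eq_mk_rep ℝ a ha
  obtain ⟨t, ht⟩ := exists_smul_eq_mk_rep ℝ b hb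
  rw [dproj, ← hs, ← ht, Units.smul_def, Units.smul_def, real_inner_smul_left,
    real_inner_smul_right, norm_smul, norm_smul]
  congr 2
  have ha' : ‖a‖ ≠ 0 := norm_ne_zero_iff.2 ha
  have hb' : ‖b‖ ≠ 0 := norm_ne_zero_iff.2 hb
  field_simp
  rw [Real.norm_eq_abs, Real.norm_eq_abs, sq_abs, sq_abs]
  ring

theorem dproj_nonneg (x y : Projectivization ℝ V) : 0 ≤ dproj x y :=
  Real.sqrt_nonneg _

theorem dproj_le_one (x y : Projectivization ℝ V) : dproj x y ≤ 1 :=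
  Real.sqrt_le_one.2 (sub_le_self _ (sq_nonneg _))

theorem dproj_mk_le (a b : V) (ha : a ≠ 0) (hb : b ≠ 0) (t : ℝ) :
    dproj (mk ℝ a ha) (mk ℝ b hb) ≤ ‖a - t • b‖ / ‖a‖ := by
  have ha' : 0 < ‖a‖ := norm_pos_iff.2 ha
  have hb' : 0 < ‖b‖ := norm_pos_iff.2 hb
  rw [dproj_mk, Real.sqrt_le_left (by positivity), div_pow, div_pow, mul_pow, norm_sub_sq_real, real_inner_smul_right, norm_smul,
    Real.norm_eq_abs, mul_pow, sq_abs, sub_le_iff_le_add,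
    div_add_div _ _ (by positivity) (by positivity),
    le_div_iff₀ (by positivity)]
  nlinarith [sq_nonneg (⟪a, b⟫ - t * ‖b‖ ^ 2)]

theorem dproj_mk_eq_norm_sub {p r : V} (hp : ‖p‖ = 1) (hr : ‖r‖ = 1) (hp0 : p ≠ 0) (hr0 : r ≠ 0) :
    dproj (mk ℝ p hp0) (mk ℝ r hr0) = ‖p - ⟪r, p⟫ • r‖ := by
  have h : ‖p - ⟪r, p⟫ • r‖ ^ 2 = 1 - ⟪p, r⟫ ^ 2 := by
    rw [norm_sub_sq_real, real_inner_smul_right, norm_smul, Real.norm_eq_abs, mul_pow, sq_abs,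
      hp, hr, real_inner_comm]
    ring
  rw [dproj_mk, hp, hr, one_mul, div_one, ← h, Real.sqrt_sq (norm_nonneg _)]

theorem le_abs_inner_of_forall_le_dproj {v p : V} (hv : ‖v‖ = 1) (hp : ‖p‖ = 1) (hp0 : p ≠ 0)
    (hW : (ℝ ∙ v)ᗮ ≠ ⊥) {ε : ℝ}
    (h : ∀ z : Projectivization ℝ V, z.submodule ≤ (ℝ ∙ v)ᗮ → ε ≤ dproj (mk ℝ p hp0) z) :
    ε ≤ |⟪v, p⟫| := by
  have hmk : ∀ w (hw : w ≠ 0), w ∈ (ℝ ∙ v)ᗮ → (mk ℝ w hw).submodule ≤ (ℝ ∙ v)ᗮ := fun w _ hw => by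
    rwa [submodule_mk, Submodule.span_singleton_le_iff_mem]
  set w := p - ⟪v, p⟫ • v
  have hwW : w ∈ (ℝ ∙ v)ᗮ := by
    rw [Submodule.mem_orthogonal_singleton_iff_inner_right, inner_sub_right, real_inner_smul_right,
      real_inner_self_eq_norm_sq, hv]
    ring
  rcases eq_or_ne w 0 with hw0 | hw0
  · obtain ⟨z, hz, hz0⟩ := (Submodule.ne_bot_iff _).1 hW
    have hpv : p = ⟪v, p⟫ • v := sub_eq_zero.1 hw0
    have hc : |⟪v, p⟫| = 1 := by rw [← hp, hpv, norm_smul, hv, mul_one, Real.norm_eq_abs, ← hpv]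
    exact hc ▸ (h _ (hmk z hz0 hz)).trans (dproj_le_one _ _)
  · calc ε ≤ dproj (mk ℝ p hp0) (mk ℝ w hw0) := h _ (hmk w hw0 hwW)
      _ ≤ ‖p - (1 : ℝ) • w‖ / ‖p‖ := dproj_mk_le _ _ _ _ 1
      _ = |⟪v, p⟫| := by simp [w, norm_smul, hv, hp]

theorem dproj_mk_apply_le {g : V ≃L[ℝ] V} {v a b : V} {σ ε t : ℝ} (hv : ‖v‖ = 1)
    (hgv : ‖g v‖ = ‖(g : V →L[ℝ] V)‖) (hσ : ∀ w ∈ (ℝ ∙ v)ᗮ, ‖g w‖ ≤ σ * ‖w‖) (ha : a ≠ 0)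
    (hb : b ≠ 0) (hε : 0 < ε) (haε : ε ≤ |⟪v, a⟫|) (ht : ⟪v, a - t • b⟫ = 0) :
    dproj (mk ℝ (g a) ((map_ne_zero_iff g g.injective).2 ha))
        (mk ℝ (g b) ((map_ne_zero_iff g g.injective).2 hb))
      ≤ ε⁻¹ * (σ / ‖(g : V →L[ℝ] V)‖) * ‖a - t • b‖ := by
  have hv0 : v ≠ 0 := ne_zero_of_norm_ne_zero (hv ▸ one_ne_zero)
  have hg : 0 < ‖(g : V →L[ℝ] V)‖ := hgv ▸ norm_pos_iff.2 ((map_ne_zero_iff g g.injective).2 hv0)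
  have hga : ε * ‖(g : V →L[ℝ] V)‖ ≤ ‖g a‖ :=
    (mul_le_mul_of_nonneg_right haε hg.le).trans (abs_inner_mul_opNorm_le_norm_apply hv hgv a)
  have hgu := hσ _ (Submodule.mem_orthogonal_singleton_iff_inner_right.2 ht)
  calc _ ≤ ‖g a - t • g b‖ / ‖g a‖ := dproj_mk_le _ _ _ _ t
    _ = ‖g (a - t • b)‖ / ‖g a‖ := by rw [map_sub, map_smul]
    _ ≤ σ * ‖a - t • b‖ / (ε * ‖(g : V →L[ℝ] V)‖) :=
      div_le_div₀ ((norm_nonneg _).trans hgu) hgu (by positivity) hga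
    _ = _ := by field_simp

theorem dproj_projAct_le {g : V ≃L[ℝ] V} {v p r : V} {σ ε : ℝ} (hv : ‖v‖ = 1)
    (hgv : ‖g v‖ = ‖(g : V →L[ℝ] V)‖) (hσ₀ : 0 ≤ σ) (hσ : ∀ w ∈ (ℝ ∙ v)ᗮ, ‖g w‖ ≤ σ * ‖w‖)
    (hp : ‖p‖ = 1) (hr : ‖r‖ = 1) (hp0 : p ≠ 0) (hr0 : r ≠ 0) (hε : 0 < ε)
    (hpε : ε ≤ |⟪v, p⟫|) (hrε : ε ≤ |⟪v, r⟫|) :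
    dproj (projAct g (mk ℝ p hp0)) (projAct g (mk ℝ r hr0))
      ≤ (1 + ε⁻¹) * ε⁻¹ * (σ / ‖(g : V →L[ℝ] V)‖) * dproj (mk ℝ p hp0) (mk ℝ r hr0) := by
  have hvr : ⟪v, r⟫ ≠ 0 := fun h => by rw [h, abs_zero] at hrε; linarith
  set y := p - ⟪r, p⟫ • r
  -- `‖y‖ = dproj [p] [r]`, and `t` is chosen so that `p - t • r ∈ (ℝ ∙ v)ᗮ`
  set t := ⟪r, p⟫ + ⟪v, y⟫ / ⟪v, r⟫
  have hu : p - t • r = y - (⟪v, y⟫ / ⟪v, r⟫) • r := by simp only [y, t, add_smul, sub_sub]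
  have ht : ⟪v, p - t • r⟫ = 0 := by
    rw [hu, inner_sub_right, real_inner_smul_right, div_mul_cancel₀ _ hvr, sub_self]
  rw [projAct_mk, projAct_mk, dproj_mk_eq_norm_sub hp hr]
  calc _ ≤ ε⁻¹ * (σ / ‖(g : V →L[ℝ] V)‖) * ‖p - t • r‖ :=
        dproj_mk_apply_le hv hgv hσ hp0 hr0 hε hpε ht
    _ ≤ ε⁻¹ * (σ / ‖(g : V →L[ℝ] V)‖) * ((1 + ε⁻¹) * ‖y‖) := by
      rw [hu]
      gcongr
      exact (norm_sub_inner_div_inner_smul_le hv hr y).trans (by gcongr)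
    _ = _ := by ring

theorem dproj_projAct_mk_le {g : V ≃L[ℝ] V} {v p : V} {σ ε : ℝ} (hv : ‖v‖ = 1)
    (hgv : ‖g v‖ = ‖(g : V →L[ℝ] V)‖) (hσ₀ : 0 ≤ σ) (hσ : ∀ w ∈ (ℝ ∙ v)ᗮ, ‖g w‖ ≤ σ * ‖w‖)
    (hp : ‖p‖ = 1) (hp0 : p ≠ 0) (hv0 : v ≠ 0) (hε : 0 < ε) (hpε : ε ≤ |⟪v, p⟫|) :
    dproj (projAct g (mk ℝ p hp0)) (mk ℝ (g v) ((map_ne_zero_iff g g.injective).2 hv0))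
      ≤ ε⁻¹ * (σ / ‖(g : V →L[ℝ] V)‖) := by
  have ht : ⟪v, p - ⟪v, p⟫ • v⟫ = 0 := by
    rw [inner_sub_right, real_inner_smul_right, real_inner_self_eq_norm_sq, hv]
    ring
  rw [projAct_mk]
  calc _ ≤ ε⁻¹ * (σ / ‖(g : V →L[ℝ] V)‖) * ‖p - ⟪v, p⟫ • v‖ :=
        dproj_mk_apply_le hv hgv hσ hp0 hv0 hε hpε ht
    _ ≤ ε⁻¹ * (σ / ‖(g : V →L[ℝ] V)‖) * 1 := by
      gcongr
      rw [← dproj_mk_eq_norm_sub hp hv hp0 hv0]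
      exact dproj_le_one _ _
    _ = _ := mul_one _

theorem exp_neg_mu1_sub_mu2 (g : V ≃L[ℝ] V) {v : V} (hv : ‖v‖ = 1)
    (hgv : ‖g v‖ = ‖(g : V →L[ℝ] V)‖) (hW : (ℝ ∙ v)ᗮ ≠ ⊥) :
    Real.exp (-(mu1 g - mu2 g))
      = ‖(g : V →L[ℝ] V).comp (ℝ ∙ v)ᗮ.subtypeL‖ / ‖(g : V →L[ℝ] V)‖ := by
  have hv0 : v ≠ 0 := ne_zero_of_norm_ne_zero (hv ▸ one_ne_zero)
  have hg : 0 < ‖(g : V →L[ℝ] V)‖ := hgv ▸ norm_pos_iff.2 ((map_ne_zero_iff g g.injective).2 hv0)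
  have hσ : 0 < ‖(g : V →L[ℝ] V).comp (ℝ ∙ v)ᗮ.subtypeL‖ := by
    obtain ⟨w, hw, hw0⟩ := (Submodule.ne_bot_iff _).1 hW
    have hgw : 0 < ‖g w‖ := norm_pos_iff.2 ((map_ne_zero_iff g g.injective).2 hw0)
    have hle := ((g : V →L[ℝ] V).comp (ℝ ∙ v)ᗮ.subtypeL).le_opNorm ⟨w, hw⟩
    exact pos_of_mul_pos_left (hgw.trans_le hle) (norm_nonneg _)
  rw [mu1, mu2, iInf_norm_comp_subtypeL_eq finrank_euclideanSpace_fin hv hgv, neg_sub,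
    Real.exp_sub, Real.exp_log hσ, Real.exp_log hg]

end Projective

theorem stmt9 (d : ℕ) (hd : 2 ≤ d) (ε : ℝ) (hε : 0 < ε) :
    ∃ D : ℝ, 1 ≤ D ∧
      ∀ g : EuclideanSpace ℝ (Fin d) ≃L[ℝ] EuclideanSpace ℝ (Fin d),
        ∃ (yplus : Projectivization ℝ (EuclideanSpace ℝ (Fin d)))
          (W : Submodule ℝ (EuclideanSpace ℝ (Fin d))),
          Module.finrank ℝ W = d - 1 ∧
          (∀ x y : Projectivization ℝ (EuclideanSpace ℝ (Fin d)),
            (∀ z, z.submodule ≤ W → ε ≤ dproj x z) →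
            (∀ z, z.submodule ≤ W → ε ≤ dproj y z) →
            dproj (projAct g x) (projAct g y)
              ≤ D * Real.exp (-(mu1 g - mu2 g)) * dproj x y) ∧
          (∀ x : Projectivization ℝ (EuclideanSpace ℝ (Fin d)),
            (∀ z, z.submodule ≤ W → ε ≤ dproj x z) →
            dproj (projAct g x) yplus ≤ D * Real.exp (-(mu1 g - mu2 g))) := by
  have hε₁ : 1 ≤ 1 + ε⁻¹ := le_add_of_nonneg_right (inv_nonneg.2 hε.le)
  have hD : (1 + ε⁻¹) * ε⁻¹ ≤ (1 + ε⁻¹) ^ 2 := by nlinarith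
  have hD' : ε⁻¹ ≤ (1 + ε⁻¹) ^ 2 := by nlinarith
  refine ⟨(1 + ε⁻¹) ^ 2, one_le_pow₀ hε₁, fun g => ?_⟩
  have : NeZero d := ⟨by omega⟩
  obtain ⟨v, hv, hgv⟩ := g.toContinuousLinearMap.exists_norm_eq_one_norm_apply_eq_opNorm
  have hv0 : v ≠ 0 := ne_zero_of_norm_ne_zero (hv ▸ one_ne_zero)
  have hW : finrank ℝ (ℝ ∙ v)ᗮ = d - 1 := by
    rw [finrank_orthogonal_span_singleton_eq_sub_one hv0, finrank_euclideanSpace_fin]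
  have hW0 : (ℝ ∙ v)ᗮ ≠ ⊥ := by
    rw [ne_eq, ← Submodule.finrank_eq_zero, hW]
    omega
  have hσ : ∀ w ∈ (ℝ ∙ v)ᗮ, ‖g w‖ ≤ ‖g.toContinuousLinearMap.comp (ℝ ∙ v)ᗮ.subtypeL‖ * ‖w‖ :=
    fun w hw => (g.toContinuousLinearMap.comp (ℝ ∙ v)ᗮ.subtypeL).le_opNorm ⟨w, hw⟩
  refine ⟨.mk ℝ (g v) ((map_ne_zero_iff g g.injective).2 hv0), (ℝ ∙ v)ᗮ, hW,
    fun x y hx hy => ?_, fun x hx => ?_⟩ <;>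
    rw [exp_neg_mu1_sub_mu2 g hv hgv hW0]
  · obtain ⟨p, hp0, hp, rfl⟩ := x.exists_eq_mk_norm_eq_one
    obtain ⟨r, hr0, hr, rfl⟩ := y.exists_eq_mk_norm_eq_one
    refine (dproj_projAct_le hv hgv (by positivity) hσ hp hr hp0 hr0 hε
      (le_abs_inner_of_forall_le_dproj hv hp hp0 hW0 hx)
      (le_abs_inner_of_forall_le_dproj hv hr hr0 hW0 hy)).trans ?_
    exact mul_le_mul_of_nonneg_right (by gcongr) (dproj_nonneg _ _)
  · obtain ⟨p, hp0, hp, rfl⟩ := x.exists_eq_mk_norm_eq_one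
    refine (dproj_projAct_mk_le hv hgv (by positivity) hσ hp hp0 hv0 hε
      (le_abs_inner_of_forall_le_dproj hv hp hp0 hW0 hx)).trans ?_
    gcongr
end

section
/- Let u be the unipotent element of GL(ℝ^d) (d ≥ 2) fixing e₂,…,e_d and sending e₁ to e₁ + v for some v ∈ span(e₂,…,e_d). Then the first singular value of u satisfies μ₁(u) = μ₁(u⁻¹) = ½ log(1 + (‖v‖² + √(‖v‖²(4+‖v‖²)))/2), and consequently μ₁(u) + μ₁(u⁻¹) ≤ log(2(1+‖v‖²)). -/
/-!
Put `t = ‖v‖` and write `x = a e₁ + y` with `y ⊥ e₁`. Then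
`‖u x‖² = a² + ‖y‖² + 2 a ⟪y, v⟫ + a² t²`, and Cauchy–Schwarz bounds this by the quadratic form
of `[[1 + t², t], [t, 1]]` at `(a, ‖y‖)`. Its top eigenvalue `Λ` is the larger root of
`X² - (2 + t²) X + 1`, and the bound by `Λ (a² + ‖y‖²)` is AM–GM with weights `Λ - 1 - t²` and
`Λ - 1`, whose product is `t²`. Equality holds at `x = (Λ - 1) e₁ + v`, so `‖u‖ = √Λ`. The inverse
`u⁻¹` is the transvection by `-v`, hence has the same norm, and `Λ ≤ 2 (1 + t²)`.
-/

open Real RealInnerProductSpace Module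

theorem two_mul_mul_le_of_mul_eq_sq {p q t : ℝ} (hp : 0 ≤ p) (hq : 0 ≤ q) (ht : 0 ≤ t)
    (hpq : p * q = t ^ 2) (a b : ℝ) : 2 * t * (a * b) ≤ p * a ^ 2 + q * b ^ 2 := by
  have hsqrt : √p * √q = t := by rw [← sqrt_mul hp, hpq, sqrt_sq ht]
  calc 2 * t * (a * b) = 2 * (√p * a) * (√q * b) := by rw [← hsqrt]; ring
    _ ≤ (√p * a) ^ 2 + (√q * b) ^ 2 := two_mul_le_add_sq _ _
    _ = p * a ^ 2 + q * b ^ 2 := by rw [mul_pow, mul_pow, sq_sqrt hp, sq_sqrt hq]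

-- The larger root of `X² - (2 + t²) X + 1`, the characteristic polynomial of `uᵀu` on `span(e, v)`.
noncomputable def transvectionNormSq (t : ℝ) : ℝ := 1 + (t ^ 2 + √(t ^ 2 * (4 + t ^ 2))) / 2

section transvectionNormSq

variable (t : ℝ)

theorem transvectionNormSq_sub_one_mul :
    (transvectionNormSq t - 1) * (transvectionNormSq t - 1 - t ^ 2) = t ^ 2 := by
  unfold transvectionNormSq
  linear_combination (sq_sqrt (by positivity : 0 ≤ t ^ 2 * (4 + t ^ 2))) / 4

theorem one_add_sq_le_transvectionNormSq : 1 + t ^ 2 ≤ transvectionNormSq t := by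
  have : t ^ 2 ≤ √(t ^ 2 * (4 + t ^ 2)) := le_sqrt_of_sq_le (by nlinarith [sq_nonneg t])
  unfold transvectionNormSq
  linarith

theorem transvectionNormSq_le : transvectionNormSq t ≤ 2 * (1 + t ^ 2) := by
  have : √(t ^ 2 * (4 + t ^ 2)) ≤ t ^ 2 + 2 := sqrt_le_iff.2 ⟨by positivity, by nlinarith⟩
  unfold transvectionNormSq
  nlinarith [sq_nonneg t]

theorem transvectionNormSq_pos : 0 < transvectionNormSq t := by
  unfold transvectionNormSq
  positivity

theorem add_two_mul_add_le_transvectionNormSq_mul {a b c : ℝ} (ht : 0 ≤ t) (hc : |c| ≤ b * t) :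
    a ^ 2 + b ^ 2 + 2 * a * c + a ^ 2 * t ^ 2 ≤ transvectionNormSq t * (a ^ 2 + b ^ 2) := by
  have hL := one_add_sq_le_transvectionNormSq t
  have ht2 := sq_nonneg t
  have hac : a * c ≤ t * (|a| * b) :=
    calc a * c ≤ |a| * |c| := (le_abs_self _).trans (abs_mul a c).le
      _ ≤ |a| * (b * t) := by gcongr
      _ = t * (|a| * b) := by ring
  have amgm := two_mul_mul_le_of_mul_eq_sq (by linarith) (by linarith) ht
    ((mul_comm _ _).trans (transvectionNormSq_sub_one_mul t)) |a| b
  rw [sq_abs] at amgm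
  linarith

end transvectionNormSq

theorem LinearMap.eq_transvection {R V : Type*} [CommRing R] [AddCommGroup V] [Module R V]
    {f : V →ₗ[R] V} {φ : Dual R V} {e v : V} (hφe : φ e = 1) (hfe : f e = e + v)
    (hfix : ∀ x, φ x = 0 → f x = x) : f = transvection φ v := by
  ext x
  have hx : φ (x - φ x • e) = 0 := by simp [hφe]
  calc f x = f (x - φ x • e) + φ x • f e := by rw [← map_smul, ← map_add, sub_add_cancel]
    _ = transvection φ v x := by rw [hfix _ hx, hfe, transvection.apply]; module

section InnerProductSpace

variable {E : Type*} [NormedAddCommGroup E] [InnerProductSpace ℝ E] {e v : E}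

namespace LinearMap.transvection

theorem norm_innerₛₗ_apply_sq (e v x : E) :
    ‖transvection (innerₛₗ ℝ e) v x‖ ^ 2
      = ‖x‖ ^ 2 + 2 * ⟪e, x⟫ * ⟪x, v⟫ + ⟪e, x⟫ ^ 2 * ‖v‖ ^ 2 := by
  rw [transvection.apply, innerₛₗ_apply_apply, norm_add_sq_real, real_inner_smul_right,
    norm_smul, mul_pow, Real.norm_eq_abs, sq_abs]
  ring

theorem norm_innerₛₗ_apply_le (he : ‖e‖ = 1) (hev : ⟪e, v⟫ = 0) (x : E) :
    ‖transvection (innerₛₗ ℝ e) v x‖ ≤ √(transvectionNormSq ‖v‖) * ‖x‖ := by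
  set y := x - ⟪e, x⟫ • e
  have hey : ⟪e, y⟫ = 0 := by simp [y, inner_sub_right, real_inner_smul_right, he]
  have hx : ‖x‖ ^ 2 = ⟪e, x⟫ ^ 2 + ‖y‖ ^ 2 := by
    have := norm_add_sq_eq_norm_sq_add_norm_sq_real (x := ⟪e, x⟫ • e) (y := y)
      (by rw [real_inner_smul_left, real_inner_comm, hey, mul_zero])
    rw [add_sub_cancel, norm_smul, he, mul_one, Real.norm_eq_abs, abs_mul_abs_self] at this
    rw [sq, sq, sq, this]
  have hxv : ⟪x, v⟫ = ⟪y, v⟫ := by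
    simp [y, inner_sub_left, real_inner_smul_left, hev]
  rw [← sqrt_sq (norm_nonneg _), ← sqrt_sq (norm_nonneg x),
    ← sqrt_mul (transvectionNormSq_pos _).le]
  gcongr
  rw [norm_innerₛₗ_apply_sq, hx, hxv]
  exact add_two_mul_add_le_transvectionNormSq_mul _ (norm_nonneg v) (abs_real_inner_le_norm y v)

theorem exists_norm_innerₛₗ_apply_eq (he : ‖e‖ = 1) (hev : ⟪e, v⟫ = 0) :
    ∃ x ≠ 0, ‖transvection (innerₛₗ ℝ e) v x‖ = √(transvectionNormSq ‖v‖) * ‖x‖ := by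
  rcases eq_or_ne v 0 with rfl | hv
  · refine ⟨e, norm_ne_zero_iff.1 (by simp [he]), ?_⟩
    simp [transvectionNormSq]
  set t := ‖v‖
  set lam := transvectionNormSq t - 1
  have hroot : lam * (lam - t ^ 2) = t ^ 2 := transvectionNormSq_sub_one_mul t
  have he' : ⟪e, e⟫ = 1 := by rw [real_inner_self_eq_norm_sq, he, one_pow]
  have hx : ‖lam • e + v‖ ^ 2 = lam ^ 2 + t ^ 2 := by
    rw [norm_add_sq_real, real_inner_smul_left, hev, norm_smul, he, mul_one, Real.norm_eq_abs,
      sq_abs]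
    ring
  refine ⟨lam • e + v, fun h0 => hv ?_, ?_⟩
  · rw [h0, norm_zero] at hx
    exact norm_eq_zero.1 <| pow_eq_zero_iff two_ne_zero |>.1 <| by
      nlinarith [sq_nonneg lam, sq_nonneg t]
  rw [← sqrt_sq (norm_nonneg _), ← sqrt_sq (norm_nonneg (lam • e + v)),
    ← sqrt_mul (transvectionNormSq_pos _).le]
  congr 1
  rw [norm_innerₛₗ_apply_sq, hx]
  simp only [inner_add_right, inner_add_left, real_inner_smul_right, real_inner_smul_left, he',
    hev, real_inner_self_eq_norm_sq]
  linear_combination (-lam) * hroot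

end LinearMap.transvection

open LinearMap.transvection in
theorem ContinuousLinearMap.norm_eq_sqrt_transvectionNormSq {w : E →L[ℝ] E} (he : ‖e‖ = 1)
    (hev : ⟪e, v⟫ = 0)
    (hw : (w : E →ₗ[ℝ] E) = LinearMap.transvection (innerₛₗ ℝ e) v) :
    ‖w‖ = √(transvectionNormSq ‖v‖) := by
  have hw' (x : E) : w x = LinearMap.transvection (innerₛₗ ℝ e) v x := LinearMap.congr_fun hw x
  obtain ⟨x, hx, hwx⟩ := exists_norm_innerₛₗ_apply_eq he hev
  refine le_antisymm (w.opNorm_le_bound (sqrt_nonneg _) fun y => ?_) ?_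
  · rw [hw']; exact norm_innerₛₗ_apply_le he hev y
  · refine le_of_mul_le_mul_right ?_ (norm_pos_iff.2 hx)
    rw [← hwx, ← hw']
    exact w.le_opNorm x

theorem ContinuousLinearEquiv.norm_eq_sqrt_transvectionNormSq {u : E ≃L[ℝ] E} (he : ‖e‖ = 1)
    (hev : innerₛₗ ℝ e v = 0)
    (hu : u.toLinearEquiv = LinearEquiv.transvection hev) :
    ‖(u : E →L[ℝ] E)‖ = √(transvectionNormSq ‖v‖) ∧
      ‖(u.symm : E →L[ℝ] E)‖ = √(transvectionNormSq ‖v‖) := by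
  have hev' : innerₛₗ ℝ e (-v) = 0 := by rw [LinearMap.map_neg, hev, neg_zero]
  have hu_symm : u.symm.toLinearEquiv = LinearEquiv.transvection hev' := by
    rw [ContinuousLinearEquiv.toLinearEquiv_symm, hu, LinearEquiv.transvection.symm_eq hev hev']
  constructor
  · exact ContinuousLinearMap.norm_eq_sqrt_transvectionNormSq he hev
      (congrArg LinearEquiv.toLinearMap hu)
  · rw [← norm_neg v]
    exact ContinuousLinearMap.norm_eq_sqrt_transvectionNormSq he hev'
      (congrArg LinearEquiv.toLinearMap hu_symm)

end InnerProductSpace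

/-- Singular value computation for the unipotent `u` fixing `e₂,…,e_d` and sending
`e₁` to `e₁ + v`:  `μ₁(u) = μ₁(u⁻¹) = ½ log(1 + (‖v‖² + √(‖v‖²(4+‖v‖²)))/2)`, hence
`μ₁(u) + μ₁(u⁻¹) ≤ log(2(1+‖v‖²))`.  Here `μ₁(g)` is the log of the operator norm. -/
theorem stmt12 (d : ℕ) (hd : 2 ≤ d) (v : EuclideanSpace ℝ (Fin d))
    (hv : v ⟨0, by omega⟩ = 0)
    (u : EuclideanSpace ℝ (Fin d) ≃L[ℝ] EuclideanSpace ℝ (Fin d))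
    (hu1 : u (EuclideanSpace.single (⟨0, by omega⟩ : Fin d) (1 : ℝ))
      = EuclideanSpace.single (⟨0, by omega⟩ : Fin d) (1 : ℝ) + v)
    (hufix : ∀ x : EuclideanSpace ℝ (Fin d), x ⟨0, by omega⟩ = 0 → u x = x) :
    Real.log ‖(u : EuclideanSpace ℝ (Fin d) →L[ℝ] EuclideanSpace ℝ (Fin d))‖
        = (1 / 2) * Real.log (1 + (‖v‖ ^ 2 + Real.sqrt (‖v‖ ^ 2 * (4 + ‖v‖ ^ 2))) / 2) ∧
    Real.log ‖(u.symm : EuclideanSpace ℝ (Fin d) →L[ℝ] EuclideanSpace ℝ (Fin d))‖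
        = (1 / 2) * Real.log (1 + (‖v‖ ^ 2 + Real.sqrt (‖v‖ ^ 2 * (4 + ‖v‖ ^ 2))) / 2) ∧
    Real.log ‖(u : EuclideanSpace ℝ (Fin d) →L[ℝ] EuclideanSpace ℝ (Fin d))‖
        + Real.log ‖(u.symm : EuclideanSpace ℝ (Fin d) →L[ℝ] EuclideanSpace ℝ (Fin d))‖
      ≤ Real.log (2 * (1 + ‖v‖ ^ 2)) := by
  set i₀ : Fin d := ⟨0, by omega⟩
  set e : EuclideanSpace ℝ (Fin d) := EuclideanSpace.single i₀ 1
  have hφ (x : EuclideanSpace ℝ (Fin d)) : innerₛₗ ℝ e x = x i₀ := by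
    simp [e, EuclideanSpace.inner_single_left]
  have he : ‖e‖ = 1 := by simp [e]
  have hev : innerₛₗ ℝ e v = 0 := (hφ v).trans hv
  have hu : u.toLinearEquiv = LinearEquiv.transvection hev :=
    LinearEquiv.toLinearMap_injective <| LinearMap.eq_transvection (by simp [hφ, e]) hu1
      fun x hx => hufix x ((hφ x).symm.trans hx)
  obtain ⟨hnorm, hnorm_symm⟩ := ContinuousLinearEquiv.norm_eq_sqrt_transvectionNormSq he hev hu
  have hpos := transvectionNormSq_pos ‖v‖
  have hlog : log √(transvectionNormSq ‖v‖) = 1 / 2 * log (transvectionNormSq ‖v‖) := by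
    rw [log_sqrt hpos.le]; ring
  refine ⟨by rw [hnorm, hlog]; rfl, by rw [hnorm_symm, hlog]; rfl, ?_⟩
  rw [hnorm, hnorm_symm, hlog, ← two_mul, ← mul_assoc, mul_one_div_cancel two_ne_zero, one_mul]
  exact log_le_log hpos (transvectionNormSq_le _)
end
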